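/- For every x̄, p̄ ∈ ℝ^n, if (λ₁, w₁) and (λ₂, w₂) are both classical solutions of the subcritical cell problem at (x̄, p̄), then λ₁ = λ₂. -/

import Mathlib

open Matrix MeasureTheory Set

noncomputable section

/-- Euclidean norm of a vector in `ℝ^k`. -/
def en {k : ℕ} (v : Fin k → ℝ) : ℝ := Real.sqrt (v ⬝ᵥ v)

/-- Squared Euclidean norm. -/
def sq2 {k : ℕ} (v : Fin k → ℝ) : ℝ := v ⬝ᵥ v

/-- Partial derivative in the `i`-th coordinate direction. -/
def pd {m : ℕ} (w : (Fin m → ℝ) → ℝ) (i : Fin m) (y : Fin m → ℝ) : ℝ :=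
  fderiv ℝ w y (Pi.single i 1)

/-- Gradient. -/
def vgrad {m : ℕ} (w : (Fin m → ℝ) → ℝ) (y : Fin m → ℝ) : Fin m → ℝ := fun i => pd w i y

/-- Hessian matrix. -/
def vhess {m : ℕ} (w : (Fin m → ℝ) → ℝ) (y : Fin m → ℝ) : Matrix (Fin m) (Fin m) ℝ :=
  Matrix.of fun i j => pd (pd w j) i y

/-- `ℤ^m`-periodicity. -/
def ZPer {m : ℕ} (w : (Fin m → ℝ) → ℝ) : Prop :=
  ∀ (y : Fin m → ℝ) (k : Fin m → ℤ), w (y + fun i => (k i : ℝ)) = w y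

/-- Standing hypotheses on the data. -/
structure StandingHyp {n m r : ℕ}
    (σ : (Fin n → ℝ) → (Fin m → ℝ) → Matrix (Fin n) (Fin r) ℝ)
    (b : (Fin m → ℝ) → Fin m → ℝ)
    (τ : (Fin m → ℝ) → Matrix (Fin m) (Fin r) ℝ) : Prop where
  σ_bdd : ∃ C : ℝ, ∀ x y i j, |σ x y i j| ≤ C
  σ_lip : ∃ L : ℝ, ∀ x x' y y' i j, |σ x y i j - σ x' y' i j| ≤ L * (en (x - x') + en (y - y'))
  σ_per : ∀ x y (k : Fin m → ℤ), σ x (y + fun l => (k l : ℝ)) = σ x y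
  b_lip : ∃ L : ℝ, ∀ y y' i, |b y i - b y' i| ≤ L * en (y - y')
  b_per : ∀ y (k : Fin m → ℤ), b (y + fun l => (k l : ℝ)) = b y
  τ_lip : ∃ L : ℝ, ∀ y y' i j, |τ y i j - τ y' i j| ≤ L * en (y - y')
  τ_per : ∀ y (k : Fin m → ℤ), τ (y + fun l => (k l : ℝ)) = τ y
  τ_nondeg : ∃ θ : ℝ, 0 < θ ∧ ∀ y ξ, θ * sq2 ξ ≤ sq2 ((τ y)ᵀ *ᵥ ξ)

/-- Classical solution of the critical cell problem at `(x, p)`. -/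
def IsCriticalSol {n m r : ℕ}
    (σ : (Fin n → ℝ) → (Fin m → ℝ) → Matrix (Fin n) (Fin r) ℝ)
    (b : (Fin m → ℝ) → Fin m → ℝ)
    (τ : (Fin m → ℝ) → Matrix (Fin m) (Fin r) ℝ)
    (x p : Fin n → ℝ) (lam : ℝ) (w : (Fin m → ℝ) → ℝ) : Prop :=
  ContDiff ℝ 2 w ∧ ZPer w ∧
    ∀ y, lam = sq2 ((σ x y)ᵀ *ᵥ p)
        + 2 * ((τ y *ᵥ ((σ x y)ᵀ *ᵥ p)) ⬝ᵥ vgrad w y)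
        + b y ⬝ᵥ vgrad w y
        + sq2 ((τ y)ᵀ *ᵥ vgrad w y)
        + Matrix.trace (τ y * (τ y)ᵀ * vhess w y)

/-- Classical solution of the supercritical cell problem at `(x, p)`. -/
def IsSupercriticalSol {n m r : ℕ}
    (σ : (Fin n → ℝ) → (Fin m → ℝ) → Matrix (Fin n) (Fin r) ℝ)
    (b : (Fin m → ℝ) → Fin m → ℝ)
    (τ : (Fin m → ℝ) → Matrix (Fin m) (Fin r) ℝ)
    (x p : Fin n → ℝ) (lam : ℝ) (w : (Fin m → ℝ) → ℝ) : Prop :=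
  ContDiff ℝ 2 w ∧ ZPer w ∧
    ∀ y, lam = sq2 ((σ x y)ᵀ *ᵥ p) + b y ⬝ᵥ vgrad w y
        + Matrix.trace (τ y * (τ y)ᵀ * vhess w y)

/-- Classical solution of the subcritical cell problem at `(x, p)`. -/
def IsSubcriticalSol {n m r : ℕ}
    (σ : (Fin n → ℝ) → (Fin m → ℝ) → Matrix (Fin n) (Fin r) ℝ)
    (τ : (Fin m → ℝ) → Matrix (Fin m) (Fin r) ℝ)
    (x p : Fin n → ℝ) (lam : ℝ) (w : (Fin m → ℝ) → ℝ) : Prop :=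
  ContDiff ℝ 1 w ∧ ZPer w ∧
    ∀ y, lam = sq2 ((τ y)ᵀ *ᵥ vgrad w y + (σ x y)ᵀ *ᵥ p)

/-!
The difference `w₁ - w₂` of two solutions is continuous and `ℤ^m`-periodic, so it attains a
global maximum at some `y₀`. There the two gradients coincide, and evaluating both cell
equations at `y₀` gives `lam₁ = lam₂`.
-/

namespace ZPer

variable {m : ℕ} {w w₁ w₂ : (Fin m → ℝ) → ℝ}

theorem sub (h₁ : ZPer w₁) (h₂ : ZPer w₂) : ZPer (w₁ - w₂) := fun y k => by
  simp only [Pi.sub_apply, h₁ y k, h₂ y k]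

theorem apply_fract (hw : ZPer w) (y : Fin m → ℝ) : w (fun i => Int.fract (y i)) = w y := by
  rw [← hw _ fun i => ⌊y i⌋]
  congr 1
  funext i
  exact Int.fract_add_floor (y i)

theorem exists_forall_le (hw : ZPer w) (hc : Continuous w) : ∃ y₀, ∀ y, w y ≤ w y₀ := by
  obtain ⟨y₀, -, hy₀⟩ := (isCompact_Icc (a := (0 : Fin m → ℝ)) (b := 1)).exists_isMaxOn
    (Set.nonempty_Icc.2 zero_le_one) hc.continuousOn
  refine ⟨y₀, fun y => ?_⟩
  rw [← hw.apply_fract y]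
  exact hy₀ ⟨fun i => Int.fract_nonneg (y i), fun i => (Int.fract_lt_one (y i)).le⟩

end ZPer

theorem vgrad_eq_of_isLocalMax_sub {m : ℕ} {w₁ w₂ : (Fin m → ℝ) → ℝ} {y₀ : Fin m → ℝ}
    (hd₁ : DifferentiableAt ℝ w₁ y₀) (hd₂ : DifferentiableAt ℝ w₂ y₀)
    (hmax : IsLocalMax (w₁ - w₂) y₀) : vgrad w₁ y₀ = vgrad w₂ y₀ := by
  have hfderiv : fderiv ℝ w₁ y₀ = fderiv ℝ w₂ y₀ := by
    rw [← sub_eq_zero, ← fderiv_sub hd₁ hd₂]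
    exact hmax.fderiv_eq_zero
  funext i
  simp only [vgrad, pd, hfderiv]

theorem ZPer.exists_vgrad_eq {m : ℕ} {w₁ w₂ : (Fin m → ℝ) → ℝ}
    (hp₁ : ZPer w₁) (hp₂ : ZPer w₂) (hd₁ : Differentiable ℝ w₁) (hd₂ : Differentiable ℝ w₂) :
    ∃ y₀, vgrad w₁ y₀ = vgrad w₂ y₀ := by
  obtain ⟨y₀, hy₀⟩ := (hp₁.sub hp₂).exists_forall_le (hd₁.continuous.sub hd₂.continuous)
  exact ⟨y₀, vgrad_eq_of_isLocalMax_sub (hd₁ y₀) (hd₂ y₀) (Filter.Eventually.of_forall hy₀)⟩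

theorem stmt10_general {n m r : ℕ}
    (σ : (Fin n → ℝ) → (Fin m → ℝ) → Matrix (Fin n) (Fin r) ℝ)
    (τ : (Fin m → ℝ) → Matrix (Fin m) (Fin r) ℝ)
    (xbar pbar : Fin n → ℝ)
    (lam₁ lam₂ : ℝ) (w₁ w₂ : (Fin m → ℝ) → ℝ)
    (h₁ : IsSubcriticalSol σ τ xbar pbar lam₁ w₁)
    (h₂ : IsSubcriticalSol σ τ xbar pbar lam₂ w₂) :
    lam₁ = lam₂ := by
  obtain ⟨hc₁, hp₁, he₁⟩ := h₁
  obtain ⟨hc₂, hp₂, he₂⟩ := h₂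
  obtain ⟨y₀, hgrad⟩ := hp₁.exists_vgrad_eq hp₂
    (hc₁.differentiable one_ne_zero) (hc₂.differentiable one_ne_zero)
  rw [he₁ y₀, he₂ y₀, hgrad]

/-- uniqueness of the additive eigenvalue in the subcritical cell
problem. -/
theorem stmt10 {n m r : ℕ}
    (σ : (Fin n → ℝ) → (Fin m → ℝ) → Matrix (Fin n) (Fin r) ℝ)
    (b : (Fin m → ℝ) → Fin m → ℝ)
    (τ : (Fin m → ℝ) → Matrix (Fin m) (Fin r) ℝ)
    (hyp : StandingHyp σ b τ)
    (xbar pbar : Fin n → ℝ)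
    (lam₁ lam₂ : ℝ) (w₁ w₂ : (Fin m → ℝ) → ℝ)
    (h₁ : IsSubcriticalSol σ τ xbar pbar lam₁ w₁)
    (h₂ : IsSubcriticalSol σ τ xbar pbar lam₂ w₂) :
    lam₁ = lam₂ :=
  stmt10_general σ τ xbar pbar lam₁ lam₂ w₁ w₂ h₁ h₂

end
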